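/- Let f: ℝ^d → ℝ be convex and differentiable with L-Lipschitz gradient, with unique minimizer w*. Then the gradient descent iterates with step size η = 1/L satisfy f(w_n) - f(w*) ≤ 2L‖w_0 - w*‖² / (4 + n) for all n ≥ 0. -/

import Mathlib

/-!
Write `δₙ = f wₙ - f w*` and `A = 2L‖w₀ - w*‖²`. The descent lemma gives `δₙ₊₁ ≤ δₙ - ‖∇f wₙ‖²/(2L)`
and, at the critical point `w*`, `δ₀ ≤ A/4`. Convexity gives `δₙ ≤ ⟪∇f wₙ, wₙ - w*⟫`, which together
with the previous bound makes `‖wₙ - w*‖` nonincreasing, so `δₙ ≤ ‖∇f wₙ‖ ‖w₀ - w*‖` and hence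
`A δₙ₊₁ ≤ A δₙ - δₙ²`. This quadratic recursion forces `δₙ ≤ A/(4 + n)`.
-/

open RealInnerProductSpace NNReal

theorem le_div_add_of_mul_le_mul_sub_sq {δ : ℕ → ℝ} {A c : ℝ} (hc : 0 < c)
    (hδ : ∀ n, 0 ≤ δ n) (h0 : c * δ 0 ≤ A) (hstep : ∀ n, A * δ (n + 1) ≤ A * δ n - δ n ^ 2)
    (n : ℕ) : δ n ≤ A / (c + n) := by
  rw [le_div_iff₀ (by positivity), mul_comm]
  rcases (le_trans (by have := hδ 0; positivity) h0 : 0 ≤ A).eq_or_lt with rfl | hA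
  · have hzero : δ n = 0 := pow_eq_zero_iff two_ne_zero |>.1 <|
      le_antisymm (by linarith [hstep n]) (sq_nonneg _)
    simp [hzero]
  induction n with
  | zero => simpa using h0
  | succ n ih =>
    -- writing `A = (c + n) δₙ + s`, the gap is `δₙ² + (c + n - 1) δₙ s + s² ≥ 0`
    have hs : 0 ≤ A - (c + n) * δ n := by linarith
    refine le_of_mul_le_mul_left ?_ hA
    have hn : (0 : ℝ) ≤ n := n.cast_nonneg
    push_cast
    nlinarith [hstep n, mul_nonneg (hδ n) hs, sq_nonneg (δ n - (A - (c + n) * δ n)),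
      mul_nonneg (mul_nonneg (hδ n) hs) (add_nonneg hc.le hn)]

section GradientDescent

variable {E : Type*} [NormedAddCommGroup E] [InnerProductSpace ℝ E] [CompleteSpace E]
  {f : E → ℝ} {K : ℝ≥0}

theorem DifferentiableAt.hasDerivAt_comp_add_smul {x v : E} {t : ℝ}
    (hf : DifferentiableAt ℝ f (x + t • v)) :
    HasDerivAt (fun s : ℝ => f (x + s • v)) ⟪gradient f (x + t • v), v⟫ t := by
  have hline : HasDerivAt (fun s : ℝ => x + s • v) v t := by
    simpa using ((hasDerivAt_id t).smul_const v).const_add x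
  rw [inner_gradient_left]
  exact hf.hasFDerivAt.comp_hasDerivAt t hline

theorem ConvexOn.sub_le_inner_gradient (hconv : ConvexOn ℝ Set.univ f) {x : E}
    (hf : DifferentiableAt ℝ f x) (y : E) : f x - f y ≤ ⟪gradient f x, x - y⟫ := by
  have hline : ConvexOn ℝ Set.univ (fun t : ℝ => f (x + t • (y - x))) := by
    simpa [Function.comp_def, AffineMap.lineMap_apply, add_comm]
      using hconv.comp_affineMap (AffineMap.lineMap x y)
  have hderiv := (show DifferentiableAt ℝ f (x + (0 : ℝ) • (y - x)) by simpa using hf)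
    |>.hasDerivAt_comp_add_smul
  have := hline.le_slope_of_hasDerivAt (Set.mem_univ 0) (Set.mem_univ 1) one_pos hderiv
  simp only [slope_def_field, zero_smul, add_zero, one_smul, add_sub_cancel, sub_zero,
    div_one] at this
  rw [← neg_sub y, inner_neg_right]
  linarith

theorem le_add_inner_gradient_add_of_lipschitzWith (hf : Differentiable ℝ f)
    (hlip : LipschitzWith K (gradient f)) (x y : E) :
    f y ≤ f x + ⟪gradient f x, y - x⟫ + K / 2 * ‖y - x‖ ^ 2 := by
  set v := y - x
  have hbound : ∀ t ∈ Set.Ico (0 : ℝ) 1,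
      ⟪gradient f (x + t • v), v⟫ ≤ ⟪gradient f x, v⟫ + K * t * ‖v‖ ^ 2 := by
    intro t ht
    have hdist : ‖gradient f (x + t • v) - gradient f x‖ ≤ K * (t * ‖v‖) := by
      simpa [dist_eq_norm, norm_smul, abs_of_nonneg ht.1] using hlip.dist_le_mul (x + t • v) x
    calc ⟪gradient f (x + t • v), v⟫
        = ⟪gradient f x, v⟫ + ⟪gradient f (x + t • v) - gradient f x, v⟫ := by
          rw [inner_sub_left]; ring
      _ ≤ ⟪gradient f x, v⟫ + ‖gradient f (x + t • v) - gradient f x‖ * ‖v‖ := by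
          gcongr; exact real_inner_le_norm _ _
      _ ≤ ⟪gradient f x, v⟫ + K * (t * ‖v‖) * ‖v‖ := by gcongr
      _ = ⟪gradient f x, v⟫ + K * t * ‖v‖ ^ 2 := by ring
  have hderiv : ∀ t : ℝ, HasDerivAt (fun s : ℝ => f (x + s • v)) ⟪gradient f (x + t • v), v⟫ t :=
    fun t => (hf _).hasDerivAt_comp_add_smul
  have hquad : ∀ t : ℝ,
      HasDerivAt (fun s : ℝ => f x + s * ⟪gradient f x, v⟫ + K / 2 * s ^ 2 * ‖v‖ ^ 2)
        (⟪gradient f x, v⟫ + K * t * ‖v‖ ^ 2) t := by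
    intro t
    exact ((((hasDerivAt_id' t).mul_const _).const_add (f x)).add
      (((hasDerivAt_pow 2 t).const_mul ((K : ℝ) / 2)).mul_const (‖v‖ ^ 2))).congr_deriv
      (by simp only [one_mul, Nat.cast_ofNat, pow_one, Nat.add_one_sub_one]; ring)
  have := image_le_of_deriv_right_le_deriv_boundary
    (fun t _ => (hderiv t).continuousAt.continuousWithinAt) (fun t _ => (hderiv t).hasDerivWithinAt)
    (by simp) (fun t _ => (hquad t).continuousAt.continuousWithinAt)
    (fun t _ => (hquad t).hasDerivWithinAt) hbound (Set.right_mem_Icc.2 zero_le_one)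
  simpa [v] using this

theorem apply_sub_smul_gradient_le (hf : Differentiable ℝ f) (hlip : LipschitzWith K (gradient f))
    (x : E) : f (x - (1 / (K : ℝ)) • gradient f x) ≤ f x - ‖gradient f x‖ ^ 2 / (2 * K) := by
  have h := le_add_inner_gradient_add_of_lipschitzWith hf hlip x (x - (1 / (K : ℝ)) • gradient f x)
  rw [sub_sub_cancel_left, inner_neg_right, real_inner_smul_right, real_inner_self_eq_norm_sq,
    norm_neg, norm_smul, Real.norm_of_nonneg (by positivity), mul_pow] at h
  rcases eq_or_ne (K : ℝ) 0 with hK | hK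
  · simp [hK] at h ⊢
  · convert h using 1; field_simp; ring

variable {x₀ : E}

theorem gradient_eq_zero_of_forall_le (hmin : ∀ y, f x₀ ≤ f y) : gradient f x₀ = 0 := by
  simp [gradient, IsLocalMin.fderiv_eq_zero (Filter.Eventually.of_forall hmin)]

theorem sub_le_mul_norm_sub_sq_of_forall_le (hf : Differentiable ℝ f)
    (hlip : LipschitzWith K (gradient f)) (hmin : ∀ y, f x₀ ≤ f y) (x : E) :
    f x - f x₀ ≤ K / 2 * ‖x - x₀‖ ^ 2 := by
  have := le_add_inner_gradient_add_of_lipschitzWith hf hlip x₀ x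
  rw [gradient_eq_zero_of_forall_le hmin, inner_zero_left, add_zero] at this
  linarith

theorem sq_norm_gradient_div_le_sub_of_forall_le (hf : Differentiable ℝ f)
    (hlip : LipschitzWith K (gradient f)) (hmin : ∀ y, f x₀ ≤ f y) (x : E) :
    ‖gradient f x‖ ^ 2 / (2 * K) ≤ f x - f x₀ := by
  linarith [apply_sub_smul_gradient_le hf hlip x, hmin (x - (1 / (K : ℝ)) • gradient f x)]

theorem norm_sub_smul_gradient_sub_le (hconv : ConvexOn ℝ Set.univ f) (hf : Differentiable ℝ f)
    (hlip : LipschitzWith K (gradient f)) (hmin : ∀ y, f x₀ ≤ f y) (x : E) :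
    ‖x - (1 / (K : ℝ)) • gradient f x - x₀‖ ≤ ‖x - x₀‖ := by
  -- `‖∇f x‖² / K ≤ 2 ⟪∇f x, x - x₀⟫` makes the cross term dominate the quadratic one
  have hcoc : ‖gradient f x‖ ^ 2 / (2 * K) ≤ ⟪gradient f x, x - x₀⟫ :=
    (sq_norm_gradient_div_le_sub_of_forall_le hf hlip hmin x).trans
      (hconv.sub_le_inner_gradient (hf x) x₀)
  have hexpand : ‖x - (1 / (K : ℝ)) • gradient f x - x₀‖ ^ 2 = ‖x - x₀‖ ^ 2
      - 2 / K * ⟪gradient f x, x - x₀⟫ + 2 / K * (‖gradient f x‖ ^ 2 / (2 * K)) := by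
    rw [sub_right_comm, norm_sub_sq_real, real_inner_smul_right, real_inner_comm, norm_smul,
      Real.norm_of_nonneg (by positivity)]
    ring
  refine (pow_le_pow_iff_left₀ (norm_nonneg _) (norm_nonneg _) two_ne_zero).1 ?_
  rw [hexpand]
  nlinarith [mul_le_mul_of_nonneg_left hcoc (by positivity : (0 : ℝ) ≤ 2 / K)]

theorem suboptimality_gradient_step_le (hconv : ConvexOn ℝ Set.univ f) (hf : Differentiable ℝ f)
    (hlip : LipschitzWith K (gradient f)) (hK : K ≠ 0) (hmin : ∀ y, f x₀ ≤ f y) {x : E} {R : ℝ}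
    (hR : ‖x - x₀‖ ≤ R) :
    2 * K * R ^ 2 * (f (x - (1 / (K : ℝ)) • gradient f x) - f x₀)
      ≤ 2 * K * R ^ 2 * (f x - f x₀) - (f x - f x₀) ^ 2 := by
  have hgap : f x - f x₀ ≤ ‖gradient f x‖ * R :=
    calc f x - f x₀ ≤ ⟪gradient f x, x - x₀⟫ := hconv.sub_le_inner_gradient (hf x) x₀
      _ ≤ ‖gradient f x‖ * ‖x - x₀‖ := real_inner_le_norm _ _
      _ ≤ ‖gradient f x‖ * R := by gcongr
  calc 2 * K * R ^ 2 * (f (x - (1 / (K : ℝ)) • gradient f x) - f x₀)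
      ≤ 2 * K * R ^ 2 * (f x - f x₀ - ‖gradient f x‖ ^ 2 / (2 * K)) := by
        have := apply_sub_smul_gradient_le hf hlip x
        exact mul_le_mul_of_nonneg_left (by linarith) (by positivity)
    _ = 2 * K * R ^ 2 * (f x - f x₀) - (‖gradient f x‖ * R) ^ 2 := by
        field_simp
    _ ≤ 2 * K * R ^ 2 * (f x - f x₀) - (f x - f x₀) ^ 2 := by
        gcongr; linarith [hmin x]

end GradientDescent

theorem stmt_10_general {d : ℕ} (f : EuclideanSpace ℝ (Fin d) → ℝ) (L : ℝ) (hL : 0 < L)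
    (hconv : ConvexOn ℝ Set.univ f)
    (hdiff : Differentiable ℝ f)
    (hlip : LipschitzWith (Real.toNNReal L) (gradient f))
    (wstar : EuclideanSpace ℝ (Fin d)) (hmin : ∀ w, f wstar ≤ f w)
    (w : ℕ → EuclideanSpace ℝ (Fin d))
    (hrec : ∀ n, w (n + 1) = w n - (1 / L) • gradient f (w n)) :
    ∀ n : ℕ, f (w n) - f wstar ≤ 2 * L * ‖w 0 - wstar‖ ^ 2 / (4 + n) := by
  lift L to ℝ≥0 using hL.le
  rw [Real.toNNReal_coe] at hlip
  have hdist (n : ℕ) : ‖w n - wstar‖ ≤ ‖w 0 - wstar‖ := by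
    induction n with
    | zero => rfl
    | succ n ih =>
      rw [hrec]
      exact (norm_sub_smul_gradient_sub_le hconv hdiff hlip hmin (w n)).trans ih
  refine le_div_add_of_mul_le_mul_sub_sq (δ := fun n => f (w n) - f wstar) four_pos
    (fun n => sub_nonneg.2 (hmin (w n))) ?_ fun n => ?_
  · linarith [sub_le_mul_norm_sub_sq_of_forall_le hdiff hlip hmin (w 0)]
  · rw [hrec]
    exact suboptimality_gradient_step_le hconv hdiff hlip (by exact_mod_cast hL.ne') hmin (hdist n)

theorem stmt_10 {d : ℕ} (f : EuclideanSpace ℝ (Fin d) → ℝ) (L : ℝ) (hL : 0 < L)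
    (hconv : ConvexOn ℝ Set.univ f)
    (hdiff : Differentiable ℝ f)
    (hlip : LipschitzWith (Real.toNNReal L) (gradient f))
    (wstar : EuclideanSpace ℝ (Fin d)) (hmin : ∀ w, f wstar ≤ f w)
    (huniq : ∀ w, f w ≤ f wstar → w = wstar)
    (w : ℕ → EuclideanSpace ℝ (Fin d))
    (hrec : ∀ n, w (n + 1) = w n - (1 / L) • gradient f (w n)) :
    ∀ n : ℕ, f (w n) - f wstar ≤ 2 * L * ‖w 0 - wstar‖ ^ 2 / (4 + n) :=
  stmt_10_general f L hL hconv hdiff hlip wstar hmin w hrec
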